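/- Stabilizer ground state equivalence theorem: for a Pauli Hamiltonian H = Σ_{P∈𝐏} w_P P, the minimum of E_stab(H, ⟨Q⟩) over all restricted commuting subsets Q ∈ 𝒮(𝐏) equals the minimum of ⟨ψ|H|ψ⟩ over all stabilizer states |ψ⟩. Moreover, any stabilizer state stabilized by a group ⟨Q⟩ achieving this minimum is a stabilizer ground state. -/

import Mathlib

open Matrix

/-- The space of linear operators on `n` qubits. -/
abbrev PauliOp (n : ℕ) := Matrix (Fin n → Fin 2) (Fin n → Fin 2) ℂ

/-- The four single-qubit Pauli matrices `I, X, Y, Z`. -/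
def pauli1 : Fin 4 → Matrix (Fin 2) (Fin 2) ℂ
  | 0 => 1
  | 1 => !![0, 1; 1, 0]
  | 2 => !![0, -Complex.I; Complex.I, 0]
  | 3 => !![1, 0; 0, -1]

/-- The tensor product of single-qubit Pauli matrices, as an operator on `n` qubits. -/
noncomputable def pauliTensor {n : ℕ} (p : Fin n → Fin 4) : PauliOp n :=
  fun x y => ∏ i, pauli1 (p i) (x i) (y i)

/-- A sign `±1`. -/
def sign (s : Bool) : ℂ := if s then -1 else 1

/-- A Hermitian `n`-qubit Pauli operator: `± p₁ ⊗ ⋯ ⊗ pₙ` with `pᵢ ∈ {I,X,Y,Z}`. -/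
def IsPauli {n : ℕ} (P : PauliOp n) : Prop :=
  ∃ (s : Bool) (p : Fin n → Fin 4), P = sign s • pauliTensor p

/-- The Hermitian Pauli operators acting nontrivially only on qubits whose index lies in `s`. -/
def SupportedWithin {n : ℕ} (s : Set ℕ) : Set (PauliOp n) :=
  {P | ∃ (sg : Bool) (p : Fin n → Fin 4),
    (∀ i : Fin n, (i : ℕ) ∉ s → p i = 0) ∧ P = sign sg • pauliTensor p}

/-- The Pauli operators whose last nontrivial qubit is (0-based) qubit `m`. -/
def Layer {n : ℕ} (m : ℕ) : Set (PauliOp n) :=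
  SupportedWithin (Set.Iio (m + 1)) \ SupportedWithin (Set.Iio m)

/-- A stabilizer group: a subgroup of the Hermitian `n`-qubit Pauli operators
not containing `-I`.  (Since Hermitian Paulis are involutions, closure under
multiplication plus containing `1` gives a group.) -/
structure IsStabGroup {n : ℕ} (S : Set (PauliOp n)) : Prop where
  pauli : ∀ P ∈ S, IsPauli P
  one_mem : (1 : PauliOp n) ∈ S
  mul_mem : ∀ P ∈ S, ∀ Q ∈ S, P * Q ∈ S
  neg_one_not_mem : (-1 : PauliOp n) ∉ S

/-- The stabilizer group of a state: all Hermitian Pauli operators fixing `ψ`. -/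
def Stab {n : ℕ} (ψ : (Fin n → Fin 2) → ℂ) : Set (PauliOp n) :=
  {P | IsPauli P ∧ P.mulVec ψ = ψ}

/-- The (multiplicative) group generated by a set of Pauli operators. -/
def genGroup {n : ℕ} (Q : Set (PauliOp n)) : Set (PauliOp n) :=
  (Submonoid.closure Q : Submonoid (PauliOp n))

/-- The signed closure `±Ps` of a set of Pauli operators. -/
def pmSet {n : ℕ} (Ps : Set (PauliOp n)) : Set (PauliOp n) :=
  {P | P ∈ Ps ∨ -P ∈ Ps}

/-- `𝒮(Ps)`: the restricted commuting subsets induced by `Ps`. -/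
def restrictedSubsets {n : ℕ} (Ps : Set (PauliOp n)) : Set (Set (PauliOp n)) :=
  {Q | Q ⊆ pmSet Ps ∧ Q = genGroup Q ∩ pmSet Ps ∧ (-1 : PauliOp n) ∉ genGroup Q}

open scoped Classical in
/-- `ε(P,T) = +1` if `P ∈ T`, `-1` if `-P ∈ T`, `0` otherwise. -/
noncomputable def eps {n : ℕ} (P : PauliOp n) (T : Set (PauliOp n)) : ℝ :=
  if P ∈ T then 1 else if -P ∈ T then -1 else 0

/-- The stabilizer-group energy `E_stab(H,T) = Σ_{P∈Ps} w_P ε(P,T)` of the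
Pauli Hamiltonian `H = Σ_{P∈Ps} w_P P`. -/
noncomputable def Estab {n : ℕ} (Ps : Finset (PauliOp n)) (w : PauliOp n → ℝ)
    (T : Set (PauliOp n)) : ℝ :=
  ∑ P ∈ Ps, w P * eps P T
def enc : Fin 4 → ZMod 2 × ZMod 2
  | 0 => (0,0)
  | 1 => (1,0)
  | 2 => (1,1)
  | 3 => (0,1)

def dec : ZMod 2 × ZMod 2 → Fin 4 := fun v =>
  if v = (0,0) then 0 else if v = (1,0) then 1 else if v = (1,1) then 2 else 3

lemma dec_enc : ∀ a : Fin 4, dec (enc a) = a := by decide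
lemma enc_dec : ∀ v : ZMod 2 × ZMod 2, enc (dec v) = v := by decide

def pmul (a b : Fin 4) : Fin 4 := dec (enc a + enc b)

lemma enc_pmul (a b : Fin 4) : enc (pmul a b) = enc a + enc b := enc_dec _

def pphase : Fin 4 → Fin 4 → ℂ := fun a b =>
  match a, b with
  | 1, 2 => Complex.I
  | 1, 3 => -Complex.I
  | 2, 1 => -Complex.I
  | 2, 3 => Complex.I
  | 3, 1 => Complex.I
  | 3, 2 => -Complex.I
  | _, _ => 1

lemma pauli1_mul (a b : Fin 4) : pauli1 a * pauli1 b = pphase a b • pauli1 (pmul a b) := by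
  fin_cases a <;> fin_cases b <;>
    simp (config := { decide := true }) only [pmul, enc, dec, if_true, if_false] <;>
    simp [pauli1, pphase, Matrix.one_fin_two, Matrix.mul_fin_two, Matrix.smul_of,
      Matrix.smul_cons, Matrix.smul_empty] <;>
    norm_num [Complex.ext_iff]

lemma pphase_self : ∀ a : Fin 4, pphase a a = 1 := by
  intro a; fin_cases a <;> rfl

lemma pmul_self : ∀ a : Fin 4, pmul a a = 0 := by decide

lemma pmul_comm' : ∀ a b : Fin 4, pmul a b = pmul b a := by decide

lemma pmul_eq_zero_iff : ∀ a b : Fin 4, pmul a b = 0 ↔ a = b := by decide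

lemma pphase_pow_four : ∀ a b : Fin 4, (pphase a b)^4 = 1 := by
  intro a b; unfold pphase; split <;>
    norm_num [pphase, neg_pow, Complex.I_pow_four]

def omega1 (a b : Fin 4) : ZMod 2 := (enc a).1*(enc b).2 + (enc a).2*(enc b).1

def sgn (x : ZMod 2) : ℂ := if x = 0 then 1 else -1

lemma zmod_two_add_self : (1 + 1 : ZMod 2) = 0 := by decide

lemma zmod_one_ne_zero : (1 : ZMod 2) ≠ 0 := by decide

lemma sgn_add (x y : ZMod 2) : sgn (x + y) = sgn x * sgn y := by
  rcases (by decide : ∀ x : ZMod 2, x = 0 ∨ x = 1) x with rfl | rfl <;>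
  rcases (by decide : ∀ x : ZMod 2, x = 0 ∨ x = 1) y with rfl | rfl <;>
    simp [sgn, zmod_two_add_self, zmod_one_ne_zero]

lemma sgn_sq (x : ZMod 2) : sgn x * sgn x = 1 := by
  rcases (by decide : ∀ x : ZMod 2, x = 0 ∨ x = 1) x with rfl | rfl <;> simp [sgn, zmod_one_ne_zero]

lemma sgn_ne_zero (x : ZMod 2) : sgn x ≠ 0 := by
  rcases (by decide : ∀ x : ZMod 2, x = 0 ∨ x = 1) x with rfl | rfl <;> simp [sgn, zmod_one_ne_zero]

lemma omega1_eval : ∀ a b : Fin 4, omega1 a b = if a = 0 ∨ b = 0 ∨ a = b then 0 else 1 := by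
  decide

lemma pphase_swap : ∀ a b : Fin 4, pphase a b = sgn (omega1 a b) * pphase b a := by
  intro a b; fin_cases a <;> fin_cases b <;>
    simp [omega1_eval, sgn, pphase, zmod_one_ne_zero]

lemma omega1_comm : ∀ a b : Fin 4, omega1 a b = omega1 b a := by decide

lemma star_pauli1 : ∀ (a : Fin 4) (x y : Fin 2), star (pauli1 a y x) = pauli1 a x y := by
  intro a x y; fin_cases a <;> fin_cases x <;> fin_cases y <;>
    simp [pauli1, Matrix.one_fin_two]

lemma trace_pauli1 : ∀ a : Fin 4, ∑ t, pauli1 a t t = if a = 0 then 2 else 0 := by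
  intro a; fin_cases a <;> simp [pauli1, Fin.sum_univ_two, Matrix.one_fin_two] <;> norm_num

lemma omega1_nondeg : ∀ a : Fin 4, a ≠ 0 → ∃ b, omega1 a b = 1 := by decide

section TensorAlg
variable {n : ℕ}

lemma pauliTensor_apply (p : Fin n → Fin 4) (x y : Fin n → Fin 2) :
    pauliTensor p x y = ∏ i, pauli1 (p i) (x i) (y i) := rfl

lemma pauliTensor_zero : pauliTensor (fun _ => (0 : Fin 4)) = (1 : PauliOp n) := by
  ext x y
  simp only [pauliTensor_apply, Matrix.one_apply]
  by_cases h : x = y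
  · subst h
    simp [pauli1, Matrix.one_apply]
  · obtain ⟨i, hi⟩ := Function.ne_iff.mp h
    rw [if_neg h]
    refine Finset.prod_eq_zero (Finset.mem_univ i) ?_
    simp [pauli1, Matrix.one_apply, hi]

lemma pauliTensor_mul (p q : Fin n → Fin 4) :
    pauliTensor p * pauliTensor q
      = (∏ i, pphase (p i) (q i)) • pauliTensor (fun i => pmul (p i) (q i)) := by
  ext x y
  rw [Matrix.mul_apply]
  have key : ∀ z : Fin n → Fin 2,
      pauliTensor p x z * pauliTensor q z y
        = ∏ i, (pauli1 (p i) (x i) (z i) * pauli1 (q i) (z i) (y i)) := by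
    intro z; rw [pauliTensor_apply, pauliTensor_apply, Finset.prod_mul_distrib]
  simp only [key]
  have h1 : ∑ z : Fin n → Fin 2, ∏ i, (pauli1 (p i) (x i) (z i) * pauli1 (q i) (z i) (y i))
      = ∏ i, ∑ t : Fin 2, (pauli1 (p i) (x i) t * pauli1 (q i) t (y i)) := by
    rw [Finset.prod_univ_sum, Fintype.piFinset_univ]
  rw [h1]
  have h2 : ∀ i : Fin n, ∑ t : Fin 2, (pauli1 (p i) (x i) t * pauli1 (q i) t (y i))
      = pphase (p i) (q i) * pauli1 (pmul (p i) (q i)) (x i) (y i) := by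
    intro i
    have := congrFun (congrFun (pauli1_mul (p i) (q i)) (x i)) (y i)
    rw [Matrix.mul_apply] at this
    simpa using this
  simp only [h2]
  rw [Finset.prod_mul_distrib]
  simp [pauliTensor_apply]

lemma trace_pauliTensor (p : Fin n → Fin 4) :
    Matrix.trace (pauliTensor p) = if p = (fun _ => 0) then (2:ℂ)^n else 0 := by
  rw [Matrix.trace]
  have h1 : ∑ x : Fin n → Fin 2, pauliTensor p x x
      = ∏ i, ∑ t : Fin 2, pauli1 (p i) t t := by
    simp only [Matrix.diag_apply, pauliTensor_apply]
    rw [Finset.prod_univ_sum, Fintype.piFinset_univ]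
  rw [show ∑ x, (pauliTensor p).diag x = ∑ x : Fin n → Fin 2, pauliTensor p x x from rfl, h1]
  simp only [trace_pauli1]
  by_cases h : p = (fun _ => 0)
  · subst h; simp
  · rw [if_neg h]
    obtain ⟨i, hi⟩ := Function.ne_iff.mp h
    exact Finset.prod_eq_zero (Finset.mem_univ i) (by simp [hi])

lemma trace_pauliTensor_mul (p q : Fin n → Fin 4) :
    Matrix.trace (pauliTensor p * pauliTensor q) = if p = q then (2:ℂ)^n else 0 := by
  rw [pauliTensor_mul, Matrix.trace_smul, trace_pauliTensor]
  by_cases h : p = q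
  · subst h
    simp [pphase_self, pmul_self]
  · have h2 : ¬ (fun i => pmul (p i) (q i)) = (fun _ => (0:Fin 4)) := by
      intro hc
      exact h (funext fun i => (pmul_eq_zero_iff (p i) (q i)).mp (congrFun hc i))
    simp [h, h2]

lemma prod_pphase_ne_zero (p q : Fin n → Fin 4) : (∏ i, pphase (p i) (q i)) ≠ 0 := by
  refine Finset.prod_ne_zero_iff.mpr fun i _ => ?_
  intro hc
  have := pphase_pow_four (p i) (q i)
  rw [hc] at this; norm_num at this

lemma signC_ne_zero (s : Bool) : sign s ≠ 0 := by
  cases s <;> norm_num [sign]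

lemma sign_injective {s s' : Bool} (h : sign s = sign s') : s = s' := by
  cases s <;> cases s' <;> norm_num [sign] at h <;> rfl

lemma sign_mul_sign (s t : Bool) : sign s * sign t = sign (xor s t) := by
  cases s <;> cases t <;> norm_num [sign]

lemma sign_sq (s : Bool) : sign s * sign s = 1 := by
  cases s <;> norm_num [sign]

lemma signedPauli_inj {s s' : Bool} {p q : Fin n → Fin 4}
    (h : sign s • pauliTensor p = sign s' • pauliTensor q) : s = s' ∧ p = q := by
  have h2 := congrArg (fun M => Matrix.trace (M * pauliTensor p)) h
  simp only [Matrix.smul_mul, Matrix.trace_smul, trace_pauliTensor_mul] at h2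
  have hq : q = p := by
    by_contra hc
    rw [if_neg hc] at h2
    simp only [smul_eq_mul, mul_zero, mul_eq_zero] at h2
    rcases h2 with h2 | h2
    · exact signC_ne_zero s h2
    · exact pow_ne_zero n two_ne_zero h2
  subst hq
  simp only [if_pos rfl, if_true] at h2
  have h2n : (2:ℂ)^n ≠ 0 := pow_ne_zero n two_ne_zero
  have hs : sign s = sign s' := by
    have h3 : sign s * (2:ℂ)^n = sign s' * (2:ℂ)^n := by
      simpa [smul_eq_mul] using h2
    exact mul_right_cancel₀ h2n h3
  exact ⟨sign_injective hs, rfl⟩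

end TensorAlg

section PauliFacts
variable {n : ℕ}

lemma pauliTensor_ne_zero (p : Fin n → Fin 4) : pauliTensor p ≠ 0 := by
  intro h
  have := trace_pauliTensor_mul p p
  rw [h] at this
  simp at this
  exact pow_ne_zero n two_ne_zero this.symm

lemma isPauli_one : IsPauli (1 : PauliOp n) :=
  ⟨false, fun _ => 0, by simp [sign, pauliTensor_zero]⟩

lemma sign_not (s : Bool) : sign (!s) = -sign s := by
  cases s <;> norm_num [sign]

lemma isPauli_neg {P : PauliOp n} (h : IsPauli P) : IsPauli (-P) := by
  obtain ⟨s, p, rfl⟩ := h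
  exact ⟨!s, p, by rw [sign_not, neg_smul]⟩

lemma pauliTensor_sq (p : Fin n → Fin 4) : pauliTensor p * pauliTensor p = 1 := by
  rw [pauliTensor_mul]
  simp [pphase_self, pmul_self, pauliTensor_zero]

lemma isPauli_sq {P : PauliOp n} (h : IsPauli P) : P * P = 1 := by
  obtain ⟨s, p, rfl⟩ := h
  rw [Matrix.smul_mul, Matrix.mul_smul, pauliTensor_sq, smul_smul, sign_sq, one_smul]

lemma one_ne_neg_one : (1 : PauliOp n) ≠ -1 := by
  intro h
  have := congrArg Matrix.trace h
  rw [Matrix.trace_one, Matrix.trace_neg, Matrix.trace_one] at this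
  have h2 : (2:ℂ) * Fintype.card (Fin n → Fin 2) = 0 := by ring_nf; linear_combination this
  simp at h2

/-- Product of two Hermitian Paulis: either Hermitian Pauli, or squares to `-1`. -/
lemma isPauli_mul_dichotomy {P Q : PauliOp n} (hP : IsPauli P) (hQ : IsPauli Q) :
    IsPauli (P * Q) ∨ (P * Q) * (P * Q) = -1 := by
  obtain ⟨s, p, rfl⟩ := hP
  obtain ⟨t, q, rfl⟩ := hQ
  set c : ℂ := ∏ i, pphase (p i) (q i) with hc
  have hmul : (sign s • pauliTensor p) * (sign t • pauliTensor q)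
      = (sign s * sign t * c) • pauliTensor (fun i => pmul (p i) (q i)) := by
    rw [Matrix.smul_mul, Matrix.mul_smul, pauliTensor_mul, smul_smul, smul_smul,
      mul_assoc]
  have hc4 : c^4 = 1 := by
    rw [hc, ← Finset.prod_pow]
    exact Finset.prod_eq_one fun i _ => pphase_pow_four (p i) (q i)
  have hc2 : c * c = 1 ∨ c * c = -1 := by
    rw [← mul_self_eq_one_iff]
    have : (c*c)*(c*c) = c^4 := by ring
    rw [this, hc4]
  rcases hc2 with h1 | h1
  · left
    rcases mul_self_eq_one_iff.mp h1 with h | h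
    · exact ⟨xor s t, _, by rw [hmul, h, mul_one, sign_mul_sign]⟩
    · refine ⟨!(xor s t), fun i => pmul (p i) (q i), ?_⟩
      rw [hmul, h, sign_not, sign_mul_sign]
      congr 1
      ring
  · right
    rw [hmul, Matrix.smul_mul, Matrix.mul_smul, pauliTensor_sq, smul_smul]
    have : sign s * sign t * c * (sign s * sign t * c) = -1 := by
      have h2 : (sign s * sign s) * (sign t * sign t) * (c * c) = -1 := by
        rw [sign_sq, sign_sq, h1]; ring
      linear_combination h2
    rw [this]
    simp

/-- symplectic form value on labels -/
def omegaN {n : ℕ} (p q : Fin n → Fin 4) : ZMod 2 := ∑ i, omega1 (p i) (q i)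

lemma pauliTensor_swap (p q : Fin n → Fin 4) :
    pauliTensor p * pauliTensor q = sgn (omegaN p q) • (pauliTensor q * pauliTensor p) := by
  rw [pauliTensor_mul, pauliTensor_mul]
  have h1 : (fun i => pmul (p i) (q i)) = fun i => pmul (q i) (p i) := by
    funext i; exact pmul_comm' _ _
  rw [h1, smul_smul]
  congr 1
  have h2 : ∏ i, pphase (p i) (q i) = ∏ i, (sgn (omega1 (p i) (q i)) * pphase (q i) (p i)) :=
    Finset.prod_congr rfl fun i _ => pphase_swap _ _
  rw [h2, Finset.prod_mul_distrib]
  congr 1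
  rw [omegaN]
  induction (Finset.univ : Finset (Fin n)) using Finset.cons_induction with
  | empty => simp [sgn]
  | cons i s hi ih => rw [Finset.prod_cons, Finset.sum_cons, sgn_add, ih]

lemma pauli_comm_of_omega {P Q : PauliOp n} (hP : IsPauli P) (hQ : IsPauli Q)
    {p q : Fin n → Fin 4} {s t : Bool} (hPp : P = sign s • pauliTensor p)
    (hQq : Q = sign t • pauliTensor q) (h : omegaN p q = 0) : P * Q = Q * P := by
  subst hPp hQq
  rw [Matrix.smul_mul, Matrix.mul_smul, pauliTensor_swap p q, h]
  rw [Matrix.smul_mul, Matrix.mul_smul]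
  simp only [sgn, if_pos rfl, if_true, smul_smul]
  congr 1
  ring

lemma pauli_anticomm_of_omega {p q : Fin n → Fin 4} (h : omegaN p q = 1) :
    pauliTensor p * pauliTensor q = -(pauliTensor q * pauliTensor p) := by
  rw [pauliTensor_swap p q, h]
  simp [sgn, zmod_one_ne_zero]

lemma zmod2_cases (x : ZMod 2) : x = 0 ∨ x = 1 := by revert x; decide

/-- Two Hermitian Paulis commute or anticommute. -/
lemma pauli_comm_or_anticomm {P Q : PauliOp n} (hP : IsPauli P) (hQ : IsPauli Q) :
    P * Q = Q * P ∨ P * Q = -(Q * P) := by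
  obtain ⟨s, p, hp⟩ := hP
  obtain ⟨t, q, hq⟩ := hQ
  rcases zmod2_cases (omegaN p q) with h | h
  · exact Or.inl (pauli_comm_of_omega ⟨s,p,hp⟩ ⟨t,q,hq⟩ hp hq h)
  · right
    subst hp hq
    rw [Matrix.smul_mul, Matrix.mul_smul, pauli_anticomm_of_omega h]
    rw [Matrix.smul_mul, Matrix.mul_smul, smul_smul, smul_smul, mul_comm]
    simp

/-- commuting Paulis have `ω = 0`. -/
lemma omega_of_pauli_comm {p q : Fin n → Fin 4}
    (h : pauliTensor p * pauliTensor q = pauliTensor q * pauliTensor p) :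
    omegaN p q = 0 := by
  rcases zmod2_cases (omegaN p q) with h0 | h1
  · exact h0
  · exfalso
    have h2 := pauli_anticomm_of_omega h1
    rw [h] at h2
    have h3 : (2 : ℂ) • (pauliTensor q * pauliTensor p) = 0 := by
      rw [two_smul]
      nth_rewrite 1 [h2]
      simp
    rw [pauliTensor_mul] at h3
    rw [smul_smul] at h3
    rcases smul_eq_zero.mp h3 with h4 | h4
    · exact (mul_ne_zero two_ne_zero (prod_pphase_ne_zero q p)) h4
    · exact pauliTensor_ne_zero _ h4

lemma trace_isPauli {P : PauliOp n} (h : IsPauli P) (h1 : P ≠ 1) (h2 : P ≠ -1) :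
    Matrix.trace P = 0 := by
  obtain ⟨s, p, rfl⟩ := h
  have hp : p ≠ fun _ => 0 := by
    intro hc
    subst hc
    rw [pauliTensor_zero] at h1 h2
    cases s
    · exact h1 (by simp [sign])
    · exact h2 (by simp [sign])
  rw [Matrix.trace_smul, trace_pauliTensor, if_neg hp, smul_zero]

lemma isPauli_hermitian {P : PauliOp n} (h : IsPauli P) : Pᴴ = P := by
  obtain ⟨s, p, rfl⟩ := h
  have hT : (pauliTensor p)ᴴ = pauliTensor p := by
    ext x y
    rw [Matrix.conjTranspose_apply, pauliTensor_apply, pauliTensor_apply]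
    rw [star_prod]
    exact Finset.prod_congr rfl fun i _ => star_pauli1 _ _ _
  rw [Matrix.conjTranspose_smul, hT]
  congr 1
  cases s <;> simp [sign]

end PauliFacts

section GroupMod
variable {n : ℕ}

abbrev VSp (n : ℕ) := Fin n → ZMod 2 × ZMod 2

def encn {n : ℕ} (p : Fin n → Fin 4) : VSp n := fun i => enc (p i)
def decn {n : ℕ} (v : VSp n) : Fin n → Fin 4 := fun i => dec (v i)

lemma encn_decn (v : VSp n) : encn (decn v) = v := funext fun i => enc_dec _
lemma decn_encn (p : Fin n → Fin 4) : decn (encn p) = p := funext fun i => dec_enc _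
lemma encn_injective : Function.Injective (encn (n := n)) := by
  intro p q h
  rw [← decn_encn p, ← decn_encn q, h]
lemma encn_zero : encn (fun _ => (0 : Fin 4)) = (0 : VSp n) := funext fun i => rfl
lemma decn_zero : decn (0 : VSp n) = (fun _ => (0 : Fin 4)) := funext fun i => rfl
lemma encn_pmul (p q : Fin n → Fin 4) :
    encn (fun i => pmul (p i) (q i)) = encn p + encn q := funext fun i => enc_pmul _ _

lemma smul_one_id {a : ℂ} (h : a • (1 : PauliOp n) = 1) : a = 1 := by
  have := congrFun (congrFun h (fun _ => 0)) (fun _ => 0)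
  simpa [Matrix.one_apply] using this

lemma smulPauli_mul (s t : Bool) (p q : Fin n → Fin 4) :
    (sign s • pauliTensor p) * (sign t • pauliTensor q)
      = (sign s * sign t * ∏ i, pphase (p i) (q i)) •
          pauliTensor (fun i => pmul (p i) (q i)) := by
  rw [Matrix.smul_mul, Matrix.mul_smul, pauliTensor_mul, smul_smul, smul_smul, mul_assoc]

lemma stab_pauli_mul {S : Set (PauliOp n)} (hS : IsStabGroup S) {P Q : PauliOp n}
    (hPS : P ∈ S) (hQS : Q ∈ S) {s t : Bool} {p q : Fin n → Fin 4}
    (hP : P = sign s • pauliTensor p) (hQ : Q = sign t • pauliTensor q) :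
    ∃ u : Bool, P * Q = sign u • pauliTensor (fun i => pmul (p i) (q i)) := by
  set c : ℂ := ∏ i, pphase (p i) (q i) with hc
  have hmul : P * Q = (sign s * sign t * c) • pauliTensor (fun i => pmul (p i) (q i)) := by
    rw [hP, hQ, smulPauli_mul]
  have hsq : (P * Q) * (P * Q) = 1 := isPauli_sq (hS.pauli _ (hS.mul_mem P hPS Q hQS))
  rw [hmul, Matrix.smul_mul, Matrix.mul_smul, pauliTensor_sq, smul_smul] at hsq
  have h1 : (sign s * sign t * c) * (sign s * sign t * c) = 1 := smul_one_id hsq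
  have hcc : c * c = 1 := by
    linear_combination h1 + (-(c*c)) * (sign_sq s) + (-(c*c*(sign s*sign s))) * (sign_sq t)
  rcases mul_self_eq_one_iff.mp hcc with h | h
  · exact ⟨xor s t, by rw [hmul, h, mul_one, sign_mul_sign]⟩
  · refine ⟨!(xor s t), ?_⟩
    rw [hmul, h, sign_not, sign_mul_sign]
    congr 1
    ring

lemma stab_commute {S : Set (PauliOp n)} (hS : IsStabGroup S) {P Q : PauliOp n}
    (hPS : P ∈ S) (hQS : Q ∈ S) : P * Q = Q * P := by
  rcases pauli_comm_or_anticomm (hS.pauli P hPS) (hS.pauli Q hQS) with h | h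
  · exact h
  · exfalso
    apply hS.neg_one_not_mem
    have hsq : (P*Q) * (P*Q) = -1 := by
      have h2 : (P*Q)*(P*Q) = -(P * ((Q * Q) * P)) := by
        nth_rewrite 2 [h]
        noncomm_ring
      rw [isPauli_sq (hS.pauli Q hQS), one_mul, isPauli_sq (hS.pauli P hPS)] at h2
      exact h2
    have : (P*Q)*(P*Q) ∈ S := hS.mul_mem _ (hS.mul_mem P hPS Q hQS) _ (hS.mul_mem P hPS Q hQS)
    rwa [hsq] at this

def stabLabels (S : Set (PauliOp n)) : Set (VSp n) :=
  {v | ∃ s : Bool, sign s • pauliTensor (decn v) ∈ S}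

lemma mem_stabLabels_of {S : Set (PauliOp n)} {P : PauliOp n} (hPS : P ∈ S)
    {s : Bool} {p : Fin n → Fin 4} (hP : P = sign s • pauliTensor p) :
    encn p ∈ stabLabels S := ⟨s, by rw [decn_encn, ← hP]; exact hPS⟩

lemma stabLabels_zero {S : Set (PauliOp n)} (hS : IsStabGroup S) :
    (0 : VSp n) ∈ stabLabels S := by
  refine ⟨false, ?_⟩
  rw [decn_zero, pauliTensor_zero]
  simpa [sign] using hS.one_mem

def stabMod (S : Set (PauliOp n)) (hS : IsStabGroup S) : Submodule (ZMod 2) (VSp n) where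
  carrier := stabLabels S
  zero_mem' := stabLabels_zero hS
  add_mem' := by
    rintro v w ⟨s, hs⟩ ⟨t, ht⟩
    obtain ⟨u, hu⟩ := stab_pauli_mul hS hs ht rfl rfl
    have hL : encn (fun i => pmul (decn v i) (decn w i)) = v + w := by
      rw [encn_pmul, encn_decn, encn_decn]
    refine ⟨u, ?_⟩
    have hd : decn (v + w) = fun i => pmul (decn v i) (decn w i) := by
      rw [← hL, decn_encn]
    rw [hd, ← hu]
    exact hS.mul_mem _ hs _ ht
  smul_mem' := by
    intro c v hv
    rcases zmod2_cases c with rfl | rfl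
    · rw [zero_smul]
      exact stabLabels_zero hS
    · rw [one_smul]
      exact hv

lemma mem_stabMod_iff {S : Set (PauliOp n)} (hS : IsStabGroup S) (v : VSp n) :
    v ∈ stabMod S hS ↔ ∃ s : Bool, sign s • pauliTensor (decn v) ∈ S := Iff.rfl

open scoped Classical in
noncomputable def labelOf (P : PauliOp n) : Fin n → Fin 4 :=
  if h : IsPauli P then h.choose_spec.choose else fun _ => 0

lemma labelOf_eq {P : PauliOp n} {s : Bool} {p : Fin n → Fin 4}
    (hP : P = sign s • pauliTensor p) : labelOf P = p := by
  have h : IsPauli P := ⟨s, p, hP⟩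
  have h2 := h.choose_spec.choose_spec
  have h3 : labelOf P = h.choose_spec.choose := by
    unfold labelOf
    exact dif_pos h
  rw [h3]
  exact (signedPauli_inj (h2.symm.trans hP)).2

noncomputable def labelMap {n : ℕ} : PauliOp n → VSp n := fun P => encn (labelOf P)

lemma stab_finite {S : Set (PauliOp n)} (hS : IsStabGroup S) : S.Finite := by
  have : S ⊆ Set.range (fun sp : Bool × (Fin n → Fin 4) => sign sp.1 • pauliTensor sp.2) := by
    intro P hP
    obtain ⟨s, p, hp⟩ := hS.pauli P hP
    exact ⟨(s, p), hp.symm⟩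
  exact Set.Finite.subset (Set.finite_range _) this

lemma stab_image {S : Set (PauliOp n)} (hS : IsStabGroup S) :
    labelMap '' S = stabLabels S := by
  apply Set.eq_of_subset_of_subset
  · rintro v ⟨P, hPS, rfl⟩
    obtain ⟨s, p, hp⟩ := hS.pauli P hPS
    show encn (labelOf P) ∈ stabLabels S
    rw [labelOf_eq hp]
    exact mem_stabLabels_of hPS hp
  · rintro v ⟨s, hs⟩
    refine ⟨sign s • pauliTensor (decn v), hs, ?_⟩
    show encn (labelOf (sign s • pauliTensor (decn v))) = v
    rw [labelOf_eq rfl, encn_decn]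

lemma stab_injOn {S : Set (PauliOp n)} (hS : IsStabGroup S) :
    Set.InjOn labelMap S := by
  intro P hPS Q hQS h
  obtain ⟨s, p, hp⟩ := hS.pauli P hPS
  obtain ⟨t, q, hq⟩ := hS.pauli Q hQS
  have h' : encn (labelOf P) = encn (labelOf Q) := h
  rw [labelOf_eq hp, labelOf_eq hq] at h'
  have hpq : p = q := encn_injective h'
  subst hpq
  by_cases hst : s = t
  · rw [hp, hq, hst]
  · exfalso
    apply hS.neg_one_not_mem
    have hQP : Q = -P := by
      rw [hp, hq]
      cases s <;> cases t <;> simp_all [sign]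
    have hm : P * Q ∈ S := hS.mul_mem P hPS Q hQS
    rwa [hQP, mul_neg, isPauli_sq (hS.pauli P hPS)] at hm

lemma stab_ncard {S : Set (PauliOp n)} (hS : IsStabGroup S) :
    S.ncard = 2 ^ (Module.finrank (ZMod 2) (stabMod S hS)) := by
  have h1 : S.ncard = (stabLabels S).ncard := by
    rw [← stab_image hS, Set.ncard_image_of_injOn (stab_injOn hS)]
  have h2 : (stabLabels S).ncard = Nat.card (stabMod S hS) := by
    rw [← Nat.card_coe_set_eq]
    rfl
  haveI : Fintype (stabMod S hS) := Fintype.ofFinite _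
  rw [h1, h2, Nat.card_eq_fintype_card, Module.card_eq_pow_finrank (K := ZMod 2), ZMod.card]

end GroupMod

section Symplectic
variable {n : ℕ}

noncomputable def sB (n : ℕ) : LinearMap.BilinForm (ZMod 2) (VSp n) :=
  LinearMap.mk₂ (ZMod 2) (fun v w => ∑ i, ((v i).1 * (w i).2 + (v i).2 * (w i).1))
    (fun m1 m2 w => by
      rw [← Finset.sum_add_distrib]
      exact Finset.sum_congr rfl fun i _ => by
        simp only [Pi.add_apply, Prod.fst_add, Prod.snd_add]; ring)
    (fun c m w => by
      rw [Finset.smul_sum]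
      exact Finset.sum_congr rfl fun i _ => by
        simp only [Pi.smul_apply, Prod.smul_fst, Prod.smul_snd, smul_eq_mul]; ring)
    (fun m w1 w2 => by
      rw [← Finset.sum_add_distrib]
      exact Finset.sum_congr rfl fun i _ => by
        simp only [Pi.add_apply, Prod.fst_add, Prod.snd_add]; ring)
    (fun c m w => by
      rw [Finset.smul_sum]
      exact Finset.sum_congr rfl fun i _ => by
        simp only [Pi.smul_apply, Prod.smul_fst, Prod.smul_snd, smul_eq_mul]; ring)

lemma sB_apply (v w : VSp n) :
    sB n v w = ∑ i, ((v i).1 * (w i).2 + (v i).2 * (w i).1) := rfl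

lemma sB_symm (v w : VSp n) : sB n v w = sB n w v := by
  rw [sB_apply, sB_apply]
  exact Finset.sum_congr rfl fun i _ => by ring

lemma sB_refl : (sB n).IsRefl := fun v w h => by rwa [sB_symm]

lemma omegaN_eq_sB (p q : Fin n → Fin 4) : omegaN p q = sB n (encn p) (encn q) := by
  rw [omegaN, sB_apply]
  exact Finset.sum_congr rfl fun i _ => rfl

lemma sB_nondeg : (sB n).Nondegenerate := by
  suffices hL : (sB n).SeparatingLeft from
    ⟨hL, fun v hv => hL v fun w => by rw [sB_symm]; exact hv w⟩
  intro v hv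
  by_contra hne
  obtain ⟨i, hi⟩ := Function.ne_iff.mp hne
  have key : ∀ u : ZMod 2 × ZMod 2,
      sB n v (Function.update (0 : VSp n) i u) = (v i).1 * u.2 + (v i).2 * u.1 := by
    intro u
    rw [sB_apply]
    rw [Finset.sum_eq_single i]
    · rw [Function.update_self]
    · intro j _ hj
      rw [Function.update_of_ne hj]
      simp
    · intro h; exact absurd (Finset.mem_univ i) h
  rcases zmod2_cases (v i).1 with h1 | h1
  · rcases zmod2_cases (v i).2 with h2 | h2
    · exact hi (Prod.ext h1 h2)
    · have := hv (Function.update (0 : VSp n) i (1, 0))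
      rw [key] at this
      rw [h2] at this
      simp at this
  · have := hv (Function.update (0 : VSp n) i (0, 1))
    rw [key] at this
    rw [h1] at this
    simp at this

lemma finrank_VSp : Module.finrank (ZMod 2) (VSp n) = 2 * n := by
  rw [Module.finrank_pi_fintype]
  have : ∀ i : Fin n, Module.finrank (ZMod 2) (ZMod 2 × ZMod 2) = 2 := fun _ => by
    rw [Module.finrank_prod, Module.finrank_self]
  simp [Module.finrank_prod, Module.finrank_self]
  ring

lemma sB_orth_top : (sB n).orthogonal ⊤ = ⊥ := by
  rw [Submodule.eq_bot_iff]
  intro v hv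
  apply sB_nondeg.1
  intro w
  rw [sB_symm]
  exact (LinearMap.BilinForm.mem_orthogonal_iff.mp hv) w Submodule.mem_top

lemma sB_finrank_orth (W : Submodule (ZMod 2) (VSp n)) :
    Module.finrank (ZMod 2) W + Module.finrank (ZMod 2) ((sB n).orthogonal W) = 2 * n := by
  have h := LinearMap.BilinForm.finrank_add_finrank_orthogonal (B := sB n) sB_refl W
  rw [finrank_VSp] at h
  have h2 : W ⊓ (sB n).orthogonal ⊤ = ⊥ := by
    rw [sB_orth_top, inf_bot_eq]
  rw [h2] at h
  simpa using h

lemma isotropic_le_orth {W : Submodule (ZMod 2) (VSp n)}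
    (h : ∀ v ∈ W, ∀ w ∈ W, sB n v w = 0) : W ≤ (sB n).orthogonal W := by
  intro w hw
  rw [LinearMap.BilinForm.mem_orthogonal_iff]
  intro v hv
  exact h v hv w hw

lemma isotropic_finrank_le {W : Submodule (ZMod 2) (VSp n)}
    (h : ∀ v ∈ W, ∀ w ∈ W, sB n v w = 0) : Module.finrank (ZMod 2) W ≤ n := by
  have h1 := Submodule.finrank_mono (isotropic_le_orth h)
  have h2 := sB_finrank_orth W
  omega

lemma isotropic_exists_ext {W : Submodule (ZMod 2) (VSp n)}
    (h : ∀ v ∈ W, ∀ w ∈ W, sB n v w = 0) (hlt : Module.finrank (ZMod 2) W < n) :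
    ∃ v ∈ (sB n).orthogonal W, v ∉ W := by
  by_contra hc
  push_neg at hc
  have hle : (sB n).orthogonal W ≤ W := fun v hv => hc v hv
  have h1 := Submodule.finrank_mono hle
  have h2 := sB_finrank_orth W
  omega

/-- full isotropic subspaces are maximal. -/
lemma isotropic_full_orth {W : Submodule (ZMod 2) (VSp n)}
    (h : ∀ v ∈ W, ∀ w ∈ W, sB n v w = 0) (hfull : Module.finrank (ZMod 2) W = n) :
    (sB n).orthogonal W = W := by
  have h2 := sB_finrank_orth W
  refine (Submodule.eq_of_le_of_finrank_le (isotropic_le_orth h) ?_).symm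
  omega

end Symplectic

section Extension
variable {n : ℕ}

lemma stabMod_isotropic {S : Set (PauliOp n)} (hS : IsStabGroup S) :
    ∀ v ∈ stabMod S hS, ∀ w ∈ stabMod S hS, sB n v w = 0 := by
  rintro v ⟨s, hs⟩ w ⟨t, ht⟩
  have hcomm := stab_commute hS hs ht
  rw [Matrix.smul_mul, Matrix.mul_smul, Matrix.smul_mul, Matrix.mul_smul,
    smul_smul, smul_smul] at hcomm
  have hab : sign s * sign t ≠ 0 := mul_ne_zero (signC_ne_zero s) (signC_ne_zero t)
  have hTT : pauliTensor (decn v) * pauliTensor (decn w)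
      = pauliTensor (decn w) * pauliTensor (decn v) := by
    apply smul_right_injective (PauliOp n) hab
    show (sign s * sign t) • _ = (sign s * sign t) • _
    rw [hcomm, mul_comm (sign t) (sign s)]
  have h0 := omega_of_pauli_comm hTT
  rw [omegaN_eq_sB, encn_decn, encn_decn] at h0
  exact h0

lemma stab_ncard_le {S : Set (PauliOp n)} (hS : IsStabGroup S) : S.ncard ≤ 2 ^ n := by
  rw [stab_ncard hS]
  exact Nat.pow_le_pow_right (by norm_num) (isotropic_finrank_le (stabMod_isotropic hS))

lemma stab_ext_step {S : Set (PauliOp n)} (hS : IsStabGroup S) (hcard : S.ncard < 2 ^ n) :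
    ∃ S', IsStabGroup S' ∧ S ⊆ S' ∧ S'.ncard = 2 * S.ncard := by
  have hk : Module.finrank (ZMod 2) (stabMod S hS) < n := by
    by_contra hk
    push_neg at hk
    rw [stab_ncard hS] at hcard
    exact absurd (Nat.pow_le_pow_right (by norm_num : 1 ≤ 2) hk) (by omega)
  obtain ⟨v, hvorth, hvnot⟩ := isotropic_exists_ext (stabMod_isotropic hS) hk
  set p : Fin n → Fin 4 := decn v with hp
  set g : PauliOp n := pauliTensor p with hgdef
  have hgrep : g = sign false • pauliTensor p := by simp [sign, hgdef]
  have hgP : IsPauli g := ⟨false, p, hgrep⟩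
  have hgsq : g * g = 1 := pauliTensor_sq p
  -- g commutes with every element of S
  have hcomm : ∀ P ∈ S, g * P = P * g := by
    intro P hPS
    obtain ⟨s, q, hq⟩ := hS.pauli P hPS
    have hmem : encn q ∈ stabMod S hS := mem_stabLabels_of hPS hq
    have horth := LinearMap.BilinForm.mem_orthogonal_iff.mp hvorth _ hmem
    have h0 : omegaN q p = 0 := by
      rw [omegaN_eq_sB, hp, encn_decn]
      exact horth
    exact (pauli_comm_of_omega (hS.pauli P hPS) hgP hq hgrep h0).symm
  -- no element of S has label p
  have hnot : ∀ t : Bool, sign t • pauliTensor p ∉ S := by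
    intro t ht
    exact hvnot (by
      have := mem_stabLabels_of ht rfl
      rw [hp, encn_decn] at this
      exact this)
  -- the extended set
  set S' : Set (PauliOp n) := S ∪ (fun h => g * h) '' S with hS'def
  have hgSnot : ∀ h ∈ S, g * h ∉ S := by
    intro h hh hc
    have h2 : (g * h) * h ∈ S := hS.mul_mem _ hc h hh
    rw [mul_assoc, isPauli_sq (hS.pauli h hh), mul_one] at h2
    exact hnot false (by simpa [sign] using h2)
  have hgmul : ∀ h ∈ S, ∀ h' ∈ S, (g * h) * (g * h') = h * h' := by
    intro h hh h' hh'
    calc (g * h) * (g * h') = (g * (h * g)) * h' := by noncomm_ring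
    _ = (g * (g * h)) * h' := by rw [← hcomm h hh]
    _ = ((g * g) * h) * h' := by noncomm_ring
    _ = h * h' := by rw [hgsq, one_mul]
  have hS' : IsStabGroup S' := by
    constructor
    · rintro P (hP | ⟨h, hh, rfl⟩)
      · exact hS.pauli P hP
      · rcases isPauli_mul_dichotomy hgP (hS.pauli h hh) with hPa | hsq
        · exact hPa
        · exfalso
          rw [hgmul h hh h hh, isPauli_sq (hS.pauli h hh)] at hsq
          exact one_ne_neg_one hsq
    · exact Or.inl hS.one_mem
    · rintro P (hP | ⟨h, hh, rfl⟩) Q (hQ | ⟨h', hh', rfl⟩)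
      · exact Or.inl (hS.mul_mem P hP Q hQ)
      · refine Or.inr ⟨P * h', hS.mul_mem P hP h' hh', ?_⟩
        show g * (P * h') = P * (g * h')
        rw [← mul_assoc, hcomm P hP, mul_assoc]
      · refine Or.inr ⟨h * Q, hS.mul_mem h hh Q hQ, ?_⟩
        show g * (h * Q) = (g * h) * Q
        rw [mul_assoc]
      · exact Or.inl (by rw [hgmul h hh h' hh']; exact hS.mul_mem h hh h' hh')
    · rintro (hc | ⟨h, hh, hc⟩)
      · exact hS.neg_one_not_mem hc
      · have h2 : g = -h := by
          have := congrArg (fun M => M * h) hc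
          simp only at this
          rw [mul_assoc, isPauli_sq (hS.pauli h hh), mul_one, neg_one_mul] at this
          exact this
        obtain ⟨t, q, hq⟩ := hS.pauli h hh
        have h4 : (sign false • pauliTensor p : PauliOp n) = sign (!t) • pauliTensor q := by
          rw [← hgrep, h2, hq, sign_not, neg_smul]
        obtain ⟨_, hpq⟩ := signedPauli_inj h4
        rw [← hpq] at hq
        exact hnot t (hq ▸ hh)
  refine ⟨S', hS', Set.subset_union_left, ?_⟩
  have hfin : S.Finite := stab_finite hS
  have hinj : Set.InjOn (fun h => g * h) S := by
    intro a ha b hb hab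
    simp only at hab
    have := congrArg (fun M => g * M) hab
    rwa [← mul_assoc, ← mul_assoc, hgsq, one_mul, one_mul] at this
  have hdisj : Disjoint S ((fun h => g * h) '' S) := by
    rw [Set.disjoint_right]
    rintro x ⟨h, hh, rfl⟩
    exact hgSnot h hh
  rw [hS'def, Set.ncard_union_eq hdisj hfin (hfin.image _),
    Set.ncard_image_of_injOn hinj]
  ring

lemma stab_exists_full {S : Set (PauliOp n)} (hS : IsStabGroup S) :
    ∃ T, IsStabGroup T ∧ S ⊆ T ∧ T.ncard = 2 ^ n := by
  obtain ⟨m, hm⟩ : ∃ m, 2 ^ n - S.ncard ≤ m := ⟨_, le_rfl⟩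
  induction m generalizing S with
  | zero =>
    have h1 := stab_ncard_le hS
    have h2 : S.ncard = 2 ^ n := by omega
    exact ⟨S, hS, subset_rfl, h2⟩
  | succ m ih =>
    by_cases hfull : S.ncard = 2 ^ n
    · exact ⟨S, hS, subset_rfl, hfull⟩
    · have hlt : S.ncard < 2 ^ n := lt_of_le_of_ne (stab_ncard_le hS) hfull
      obtain ⟨S', hS', hsub, hcard⟩ := stab_ext_step hS hlt
      have hpos : 0 < S.ncard :=
        (Set.ncard_pos (stab_finite hS)).mpr ⟨1, hS.one_mem⟩
      have : 2 ^ n - S'.ncard ≤ m := by omega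
      obtain ⟨T, hT, hsub', hfullT⟩ := ih hS' this
      exact ⟨T, hT, hsub.trans hsub', hfullT⟩

end Extension

section States
variable {n : ℕ}

lemma vec_neg_eq_self {ψ : (Fin n → Fin 2) → ℂ} (h : ψ = -ψ) : ψ = 0 := by
  funext x
  have := congrFun h x
  simp only [Pi.neg_apply, Pi.zero_apply] at this ⊢
  linear_combination this / 2

lemma stab_isStabGroup {ψ : (Fin n → Fin 2) → ℂ} (hψ : ψ ≠ 0) : IsStabGroup (Stab ψ) := by
  constructor
  · exact fun P hP => hP.1
  · exact ⟨isPauli_one, Matrix.one_mulVec ψ⟩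
  · intro P hP Q hQ
    have hmv : (P * Q).mulVec ψ = ψ := by
      rw [← Matrix.mulVec_mulVec, hQ.2, hP.2]
    refine ⟨?_, hmv⟩
    rcases isPauli_mul_dichotomy hP.1 hQ.1 with h | h
    · exact h
    · exfalso
      apply hψ
      apply vec_neg_eq_self
      have h2 : ((P*Q)*(P*Q)).mulVec ψ = ψ := by
        rw [← Matrix.mulVec_mulVec, hmv, hmv]
      rw [h, Matrix.neg_mulVec, Matrix.one_mulVec] at h2
      exact h2.symm
  · rintro ⟨_, hmv⟩
    apply hψ
    apply vec_neg_eq_self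
    rw [Matrix.neg_mulVec, Matrix.one_mulVec] at hmv
    exact hmv.symm

def stabMonoid (ψ : (Fin n → Fin 2) → ℂ) (hψ : ψ ≠ 0) : Submonoid (PauliOp n) where
  carrier := Stab ψ
  one_mem' := ⟨isPauli_one, Matrix.one_mulVec ψ⟩
  mul_mem' := fun {a b} ha hb => (stab_isStabGroup hψ).mul_mem a ha b hb

lemma genGroup_subset_stab {Q : Set (PauliOp n)} {ψ : (Fin n → Fin 2) → ℂ}
    (hψ : ψ ≠ 0) (h : Q ⊆ Stab ψ) : genGroup Q ⊆ Stab ψ := by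
  intro x hx
  exact (Submonoid.closure_le (S := stabMonoid ψ hψ)).mpr h hx

lemma card_states : Fintype.card (Fin n → Fin 2) = 2 ^ n := by
  simp

lemma full_stab_state {T : Set (PauliOp n)} (hT : IsStabGroup T) (hcard : T.ncard = 2 ^ n) :
    ∃ ψ : (Fin n → Fin 2) → ℂ, (Stab ψ).ncard = 2 ^ n ∧
      dotProduct (star ψ) ψ = 1 ∧ T ⊆ Stab ψ := by
  have hfin : T.Finite := stab_finite hT
  set F : Finset (PauliOp n) := hfin.toFinset with hF
  have hmemF : ∀ g, g ∈ F ↔ g ∈ T := fun g => hfin.mem_toFinset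
  set Pi : PauliOp n := ∑ g ∈ F, g with hPi
  have htr : Matrix.trace Pi = (2:ℂ)^n := by
    rw [hPi, Matrix.trace_sum]
    rw [Finset.sum_eq_single (1 : PauliOp n)]
    · rw [Matrix.trace_one, card_states]; push_cast; ring
    · intro g hg hg1
      refine trace_isPauli (hT.pauli g ((hmemF g).mp hg)) hg1 ?_
      intro hc
      exact hT.neg_one_not_mem (hc ▸ (hmemF g).mp hg)
    · intro h1
      exact absurd ((hmemF 1).mpr hT.one_mem) h1
  have hPine : Pi ≠ 0 := by
    intro hc
    rw [hc, Matrix.trace_zero] at htr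
    exact (pow_ne_zero n two_ne_zero) htr.symm
  have hgPi : ∀ g ∈ T, g * Pi = Pi := by
    intro g hg
    rw [hPi, Finset.mul_sum]
    apply Finset.sum_nbij' (fun h => g * h) (fun h => g * h)
    · intro h hh
      exact (hmemF _).mpr (hT.mul_mem g hg h ((hmemF h).mp hh))
    · intro h hh
      exact (hmemF _).mpr (hT.mul_mem g hg h ((hmemF h).mp hh))
    · intro h _
      rw [← mul_assoc, isPauli_sq (hT.pauli g hg), one_mul]
    · intro h _
      rw [← mul_assoc, isPauli_sq (hT.pauli g hg), one_mul]
    · intro h _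
      rfl
  obtain ⟨x0, y0, hxy⟩ : ∃ x y, Pi x y ≠ 0 := by
    by_contra hc
    push_neg at hc
    exact hPine (by ext x y; exact hc x y)
  set φ : (Fin n → Fin 2) → ℂ := fun x => Pi x y0 with hφ
  have hmvφ : ∀ g ∈ T, g.mulVec φ = φ := by
    intro g hg
    funext x
    have : g.mulVec φ x = (g * Pi) x y0 := by
      rw [Matrix.mul_apply, Matrix.mulVec, dotProduct]
    rw [this, hgPi g hg]
  set Snorm : ℝ := ∑ x, Complex.normSq (φ x) with hSn
  have hSpos : 0 < Snorm := by
    rw [hSn]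
    apply Finset.sum_pos' (fun x _ => Complex.normSq_nonneg _)
    exact ⟨x0, Finset.mem_univ x0, Complex.normSq_pos.mpr hxy⟩
  set c : ℝ := (Real.sqrt Snorm)⁻¹ with hc
  set ψ : (Fin n → Fin 2) → ℂ := (c : ℂ) • φ with hψdef
  have hnorm : dotProduct (star ψ) ψ = 1 := by
    rw [hψdef]
    rw [dotProduct, ]
    have : ∀ x, (star ((c:ℂ) • φ)) x * ((c:ℂ) • φ) x = (c:ℂ)^2 * ((starRingEnd ℂ) (φ x) * φ x) := by
      intro x
      simp [Complex.conj_ofReal]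
      ring
    rw [Finset.sum_congr rfl fun x _ => this x, ← Finset.mul_sum]
    have h2 : ∑ x, ((starRingEnd ℂ) (φ x) * φ x) = ((Snorm : ℝ) : ℂ) := by
      rw [hSn]
      push_cast
      exact Finset.sum_congr rfl fun x _ => by
        rw [mul_comm, Complex.mul_conj]
    rw [h2]
    have : (c:ℂ)^2 * ((Snorm : ℝ) : ℂ) = (((c^2 * Snorm : ℝ)) : ℂ) := by push_cast; ring
    rw [this, hc, inv_pow, Real.sq_sqrt hSpos.le, inv_mul_cancel₀ (ne_of_gt hSpos)]
    norm_num
  have hψne : ψ ≠ 0 := by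
    intro hc0
    rw [hc0] at hnorm
    simp [dotProduct] at hnorm
  have hTsub : T ⊆ Stab ψ := by
    intro g hg
    refine ⟨hT.pauli g hg, ?_⟩
    rw [hψdef, Matrix.mulVec_smul, hmvφ g hg]
  refine ⟨ψ, ?_, hnorm, hTsub⟩
  have h1 : 2^n ≤ (Stab ψ).ncard := by
    rw [← hcard]
    exact Set.ncard_le_ncard hTsub (stab_finite (stab_isStabGroup hψne))
  have h2 := stab_ncard_le (stab_isStabGroup hψne)
  omega

end States

section Expectation
variable {n : ℕ}

lemma pauliTensor_comm_of_pauli_comm {P Q : PauliOp n} {s t : Bool}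
    {p q : Fin n → Fin 4} (hP : P = sign s • pauliTensor p) (hQ : Q = sign t • pauliTensor q)
    (h : P * Q = Q * P) : pauliTensor p * pauliTensor q = pauliTensor q * pauliTensor p := by
  rw [hP, hQ, Matrix.smul_mul, Matrix.mul_smul, Matrix.smul_mul, Matrix.mul_smul,
    smul_smul, smul_smul] at h
  apply smul_right_injective (PauliOp n) (mul_ne_zero (signC_ne_zero s) (signC_ne_zero t))
  show (sign s * sign t) • _ = (sign s * sign t) • _
  rw [h, mul_comm (sign t) (sign s)]

lemma vecMul_eq_of_mem_stab {ψ : (Fin n → Fin 2) → ℂ} {g : PauliOp n}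
    (hg : g ∈ Stab ψ) : Matrix.vecMul (star ψ) g = star ψ := by
  have h := congrArg star hg.2
  rw [Matrix.star_mulVec, isPauli_hermitian hg.1] at h
  exact h

lemma stab_expect {ψ : (Fin n → Fin 2) → ℂ} (hcard : (Stab ψ).ncard = 2 ^ n)
    (hnorm : dotProduct (star ψ) ψ = 1) {P : PauliOp n} (hP : IsPauli P) :
    dotProduct (star ψ) (P.mulVec ψ) = ((eps P (Stab ψ) : ℝ) : ℂ) := by
  have hψ : ψ ≠ 0 := by
    intro hc
    rw [hc] at hnorm
    simp [dotProduct] at hnorm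
  have hSG := stab_isStabGroup hψ
  by_cases h1 : P ∈ Stab ψ
  · rw [eps, if_pos h1, h1.2, hnorm]
    norm_num
  · by_cases h2 : -P ∈ Stab ψ
    · have h3 := h2.2
      rw [Matrix.neg_mulVec] at h3
      have h4 : P.mulVec ψ = -ψ := neg_eq_iff_eq_neg.mp h3
      rw [eps, if_neg h1, if_pos h2, h4, dotProduct_neg, hnorm]
      norm_num
    · rw [eps, if_neg h1, if_neg h2]
      push_cast
      by_cases hcomm : ∀ g ∈ Stab ψ, P * g = g * P
      · exfalso
        obtain ⟨s, p, hp⟩ := hP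
        have hfull : Module.finrank (ZMod 2) (stabMod (Stab ψ) hSG) = n := by
          have := stab_ncard hSG
          rw [hcard] at this
          exact (Nat.pow_right_injective (le_refl 2) this.symm)
        have hmem : encn p ∈ (sB n).orthogonal (stabMod (Stab ψ) hSG) := by
          rw [LinearMap.BilinForm.mem_orthogonal_iff]
          rintro w ⟨t, ht⟩
          have hcg := hcomm _ ht
          have hTT := pauliTensor_comm_of_pauli_comm rfl hp hcg.symm
          have h0 := omega_of_pauli_comm hTT
          rw [omegaN_eq_sB, encn_decn] at h0
          exact h0
        rw [isotropic_full_orth (stabMod_isotropic hSG) hfull] at hmem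
        obtain ⟨t, ht⟩ := hmem
        rw [decn_encn] at ht
        by_cases hst : t = s
        · subst hst
          exact h1 (hp ▸ ht)
        · have hns : t = !s := by cases s <;> cases t <;> simp_all
          rw [hns, sign_not, neg_smul, ← hp] at ht
          exact h2 ht
      · push_neg at hcomm
        obtain ⟨g, hg, hng⟩ := hcomm
        have hanti : P * g = -(g * P) :=
          (pauli_comm_or_anticomm hP (hSG.pauli g hg)).resolve_left hng
        have e1 : dotProduct (star ψ) (P.mulVec ψ)
            = dotProduct (star ψ) ((P * g).mulVec ψ) := by
          rw [← Matrix.mulVec_mulVec, hg.2]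
        have e2 : dotProduct (star ψ) ((g * P).mulVec ψ)
            = dotProduct (star ψ) (P.mulVec ψ) := by
          rw [← Matrix.mulVec_mulVec, Matrix.dotProduct_mulVec, vecMul_eq_of_mem_stab hg]
        rw [hanti, Matrix.neg_mulVec, dotProduct_neg, e2] at e1
        linear_combination e1 / 2

end Expectation

section Energy
variable {n : ℕ}

lemma sum_mulVec {ι : Type*} (s : Finset ι) (M : ι → PauliOp n) (v : (Fin n → Fin 2) → ℂ) :
    (∑ i ∈ s, M i).mulVec v = ∑ i ∈ s, (M i).mulVec v := by
  funext x
  rw [Matrix.mulVec, dotProduct]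
  simp only [Matrix.sum_apply, Finset.sum_apply, Finset.sum_mul]
  rw [Finset.sum_comm]
  exact Finset.sum_congr rfl fun i _ => rfl

lemma dot_sum {ι : Type*} (s : Finset ι) (f : ι → (Fin n → Fin 2) → ℂ)
    (v : (Fin n → Fin 2) → ℂ) :
    dotProduct v (∑ i ∈ s, f i) = ∑ i ∈ s, dotProduct v (f i) := by
  rw [dotProduct]
  simp only [Finset.sum_apply, Finset.mul_sum]
  rw [Finset.sum_comm]
  exact Finset.sum_congr rfl fun i _ => rfl

lemma expect_energy {ψ : (Fin n → Fin 2) → ℂ} (hcard : (Stab ψ).ncard = 2 ^ n)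
    (hnorm : dotProduct (star ψ) ψ = 1) (Ps : Finset (PauliOp n))
    (hPauli : ∀ P ∈ Ps, IsPauli P) (w : PauliOp n → ℝ) :
    dotProduct (star ψ) ((∑ P ∈ Ps, (w P : ℂ) • P).mulVec ψ)
      = ((Estab Ps w (Stab ψ) : ℝ) : ℂ) := by
  rw [sum_mulVec, dot_sum, Estab]
  push_cast
  refine Finset.sum_congr rfl fun P hP => ?_
  rw [Matrix.smul_mulVec, dotProduct_smul, smul_eq_mul,
    stab_expect hcard hnorm (hPauli P hP)]

lemma eps_congr {T1 T2 : Set (PauliOp n)} {P : PauliOp n}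
    (h : P ∈ T1 ↔ P ∈ T2) (h' : -P ∈ T1 ↔ -P ∈ T2) : eps P T1 = eps P T2 := by
  rw [eps, eps]
  by_cases h1 : P ∈ T1
  · rw [if_pos h1, if_pos (h.mp h1)]
  · rw [if_neg h1, if_neg (fun hc => h1 (h.mpr hc))]
    by_cases h2 : -P ∈ T1
    · rw [if_pos h2, if_pos (h'.mp h2)]
    · rw [if_neg h2, if_neg (fun hc => h2 (h'.mpr hc))]

lemma mem_pmSet_of_mem {Ps : Set (PauliOp n)} {P : PauliOp n} (h : P ∈ Ps) :
    P ∈ pmSet Ps := Or.inl h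

lemma neg_mem_pmSet_of_mem {Ps : Set (PauliOp n)} {P : PauliOp n} (h : P ∈ Ps) :
    -P ∈ pmSet Ps := Or.inr (by rwa [neg_neg])

lemma pmSet_neg_closed {Ps : Set (PauliOp n)} {P : PauliOp n} (h : P ∈ pmSet Ps) :
    -P ∈ pmSet Ps := by
  rcases h with h | h
  · exact Or.inr (by rwa [neg_neg])
  · exact Or.inl h

lemma pmSet_pauli {Ps : Finset (PauliOp n)} (hPauli : ∀ P ∈ Ps, IsPauli P)
    {P : PauliOp n} (h : P ∈ pmSet (Ps : Set (PauliOp n))) : IsPauli P := by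
  rcases h with h | h
  · exact hPauli P h
  · have := isPauli_neg (hPauli _ h)
    rwa [neg_neg] at this

lemma Estab_congr {Ps : Finset (PauliOp n)} {w : PauliOp n → ℝ} {T1 T2 : Set (PauliOp n)}
    (h : ∀ P ∈ pmSet (Ps : Set (PauliOp n)), (P ∈ T1 ↔ P ∈ T2)) :
    Estab Ps w T1 = Estab Ps w T2 := by
  refine Finset.sum_congr rfl fun P hP => ?_
  have h1 := h P (mem_pmSet_of_mem hP)
  have h2 := h (-P) (neg_mem_pmSet_of_mem hP)
  rw [eps_congr h1 h2]

lemma genGroup_mono {A B : Set (PauliOp n)} (h : A ⊆ B) : genGroup A ⊆ genGroup B :=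
  Submonoid.closure_mono h

lemma subset_genGroup {A : Set (PauliOp n)} : A ⊆ genGroup A := Submonoid.subset_closure

lemma genGroup_pauli {Q : Set (PauliOp n)} (hQ : ∀ P ∈ Q, IsPauli P)
    (hneg : (-1 : PauliOp n) ∉ genGroup Q) : ∀ x ∈ genGroup Q, IsPauli x := by
  intro x hx
  have hx' : x ∈ Submonoid.closure Q := hx
  clear hx
  induction hx' using Submonoid.closure_induction with
  | mem y hy => exact hQ y hy
  | one => exact isPauli_one
  | mul a b ha hb iha ihb =>
    rcases isPauli_mul_dichotomy iha ihb with h | h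
    · exact h
    · exfalso
      apply hneg
      have hab : a * b ∈ Submonoid.closure Q := Submonoid.mul_mem _ ha hb
      have : (a*b) * (a*b) ∈ Submonoid.closure Q := Submonoid.mul_mem _ hab hab
      rw [h] at this
      exact this

lemma genGroup_isStab {Ps : Finset (PauliOp n)} (hPauli : ∀ P ∈ Ps, IsPauli P)
    {Q : Set (PauliOp n)} (hQ : Q ⊆ pmSet (Ps : Set (PauliOp n)))
    (hneg : (-1 : PauliOp n) ∉ genGroup Q) : IsStabGroup (genGroup Q) := by
  constructor
  · exact genGroup_pauli (fun P hP => pmSet_pauli hPauli (hQ hP)) hneg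
  · exact Submonoid.one_mem _
  · intro P hP R hR
    exact Submonoid.mul_mem _ hP hR
  · exact hneg

/-- `genGroup (genGroup A ∩ pmSet Ps) = genGroup A`. -/
lemma genGroup_inter_pm {Ps : Finset (PauliOp n)} {A : Set (PauliOp n)}
    (hA : A ⊆ pmSet (Ps : Set (PauliOp n))) :
    genGroup (genGroup A ∩ pmSet (Ps : Set (PauliOp n))) = genGroup A := by
  apply Set.eq_of_subset_of_subset
  · have h1 : genGroup A ∩ pmSet (Ps : Set (PauliOp n)) ⊆ genGroup A := Set.inter_subset_left
    intro x hx
    have hx' : x ∈ Submonoid.closure (genGroup A ∩ pmSet (Ps : Set (PauliOp n))) := hx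
    have hle : Submonoid.closure (genGroup A ∩ pmSet (Ps : Set (PauliOp n)))
        ≤ Submonoid.closure A := by
      rw [Submonoid.closure_le]
      intro y hy
      exact h1 hy
    exact hle hx'
  · apply genGroup_mono
    intro x hx
    exact ⟨subset_genGroup hx, hA hx⟩

/-- restricted subset induced by a generating set. -/
lemma restricted_of_gen {Ps : Finset (PauliOp n)} {A : Set (PauliOp n)}
    (hA : A ⊆ pmSet (Ps : Set (PauliOp n))) (hneg : (-1 : PauliOp n) ∉ genGroup A) :
    (genGroup A ∩ pmSet (Ps : Set (PauliOp n))) ∈ restrictedSubsets (Ps : Set (PauliOp n))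
      ∧ genGroup (genGroup A ∩ pmSet (Ps : Set (PauliOp n))) = genGroup A := by
  have hg := genGroup_inter_pm hA
  refine ⟨⟨Set.inter_subset_right, ?_, ?_⟩, hg⟩
  · rw [hg]
  · rw [hg]; exact hneg

end Energy

section Bisection
variable {n : ℕ}

lemma genGroup_union_single {Q : Set (PauliOp n)} {g : PauliOp n}
    (hgsq : g * g = 1) (hcomm : ∀ x ∈ genGroup Q, g * x = x * g) :
    genGroup (Q ∪ {g}) = genGroup Q ∪ (fun h => g * h) '' genGroup Q := by
  have one_mem : (1 : PauliOp n) ∈ genGroup Q ∪ (fun h => g * h) '' genGroup Q :=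
    Or.inl (Submonoid.one_mem (Submonoid.closure Q))
  have mul_mem : ∀ a ∈ genGroup Q ∪ (fun h => g * h) '' genGroup Q,
      ∀ b ∈ genGroup Q ∪ (fun h => g * h) '' genGroup Q,
      a * b ∈ genGroup Q ∪ (fun h => g * h) '' genGroup Q := by
    rintro a (ha | ⟨x, hx, rfl⟩) b (hb | ⟨y, hy, rfl⟩)
    · exact Or.inl (Submonoid.mul_mem _ ha hb)
    · refine Or.inr ⟨a * y, Submonoid.mul_mem _ ha hy, ?_⟩
      show g * (a * y) = a * (g * y)
      rw [← mul_assoc, hcomm a ha, mul_assoc]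
    · refine Or.inr ⟨x * b, Submonoid.mul_mem _ hx hb, ?_⟩
      show g * (x * b) = (g * x) * b
      rw [mul_assoc]
    · refine Or.inl ?_
      show (g * x) * (g * y) ∈ genGroup Q
      have heq : (g * x) * (g * y) = x * y := by
        calc (g*x)*(g*y) = (g*(x*g))*y := by noncomm_ring
        _ = (g*(g*x))*y := by rw [← hcomm x hx]
        _ = ((g*g)*x)*y := by noncomm_ring
        _ = x*y := by rw [hgsq, one_mul]
      rw [heq]
      exact Submonoid.mul_mem _ hx hy
  set R : Submonoid (PauliOp n) :=
    { carrier := genGroup Q ∪ (fun h => g * h) '' genGroup Q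
      one_mem' := one_mem
      mul_mem' := fun {a b} ha hb => mul_mem a ha b hb } with hR
  apply Set.eq_of_subset_of_subset
  · intro x hx
    have hx' : x ∈ Submonoid.closure (Q ∪ {g}) := hx
    have hle : Submonoid.closure (Q ∪ {g}) ≤ R := by
      rw [Submonoid.closure_le]
      rintro y (hy | rfl)
      · exact Or.inl (Submonoid.subset_closure hy)
      · exact Or.inr ⟨1, Submonoid.one_mem _, by simp⟩
    exact hle hx'
  · rintro x (hx | ⟨h, hh, rfl⟩)
    · exact genGroup_mono Set.subset_union_left hx
    · have hgmem : g ∈ genGroup (Q ∪ {g}) :=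
        subset_genGroup (Set.mem_union_right _ rfl)
      have hhmem : h ∈ genGroup (Q ∪ {g}) := genGroup_mono Set.subset_union_left hh
      exact Submonoid.mul_mem (Submonoid.closure (Q ∪ {g})) hgmem hhmem

lemma eps_bisect {G : Set (PauliOp n)} (hG : IsStabGroup G) {g : PauliOp n}
    (hgP : IsPauli g) (hgG : g ∉ G) (hngG : -g ∉ G)
    {P : PauliOp n} (hPP : IsPauli P) :
    eps P (G ∪ (fun h => g * h) '' G) + eps P (G ∪ (fun h => -g * h) '' G)
      = 2 * eps P G := by
  have hgsq : g * g = 1 := isPauli_sq hgP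
  -- membership characterizations
  have hmemNeg : ∀ x : PauliOp n, (x ∈ (fun h => -g * h) '' G) ↔ (-x ∈ (fun h => g * h) '' G) := by
    intro x
    constructor
    · rintro ⟨h, hh, hx⟩
      refine ⟨h, hh, ?_⟩
      have hx' : -g * h = x := hx
      show g * h = -x
      rw [← hx', neg_mul, neg_neg]
    · rintro ⟨h, hh, hx⟩
      refine ⟨h, hh, ?_⟩
      have hx' : g * h = -x := hx
      show -g * h = x
      rw [neg_mul, hx', neg_neg]
  -- exclusion facts
  have factA : ∀ x ∈ G, g * x ∉ G := by
    intro x hx hc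
    apply hgG
    have h2 : (g * x) * x ∈ G := hG.mul_mem _ hc x hx
    rwa [mul_assoc, isPauli_sq (hG.pauli x hx), mul_one] at h2
  have factB : ¬ (P ∈ G ∧ -P ∈ G) := by
    rintro ⟨h1, h2⟩
    apply hG.neg_one_not_mem
    have h3 : (-P) * P ∈ G := hG.mul_mem _ h2 P h1
    rwa [neg_mul, isPauli_sq hPP] at h3
  have factC : ∀ h ∈ G, ∀ h' ∈ G, g * h = P → g * h' = -P → False := by
    intro h hh h' hh' hP1 hP2
    apply hG.neg_one_not_mem
    have h3 : h = -h' := by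
      have h30 : g * h = -(g * h') := by rw [hP1, hP2, neg_neg]
      have h4 := congrArg (fun z => g * z) h30
      rwa [← mul_assoc, hgsq, one_mul, mul_neg, ← mul_assoc, hgsq, one_mul] at h4
    have h5 : h' * h ∈ G := hG.mul_mem _ hh' h hh
    rwa [h3, mul_neg, isPauli_sq (hG.pauli h' hh')] at h5
  have factD : ∀ x ∈ G, ∀ h ∈ G, g * h ≠ -x := by
    intro x hx h hh hc
    apply hngG
    have h2 : (g*h)*h = (-x)*h := by rw [hc]
    rw [mul_assoc, isPauli_sq (hG.pauli h hh), mul_one] at h2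
    have h6 : -g = x * h := by rw [h2, neg_mul, neg_neg]
    rw [h6]
    exact hG.mul_mem _ hx _ hh
  -- membership characterizations for the union sets
  have mm1 : ∀ x : PauliOp n, x ∈ G ∪ (fun h => -g * h) '' G ↔ (x ∈ G ∨ -x ∈ (fun h => g * h) '' G) := by
    intro x
    rw [Set.mem_union, hmemNeg]
  by_cases ha : P ∈ G
  · have hPp : P ∈ G ∪ (fun h => g * h) '' G := Or.inl ha
    have hPm : P ∈ G ∪ (fun h => -g * h) '' G := Or.inl ha
    rw [eps, if_pos hPp, eps, if_pos hPm, eps, if_pos ha]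
    norm_num
  · by_cases hb : -P ∈ G
    · have hc : P ∉ (fun h => g * h) '' G := by
        rintro ⟨h, hh, hP1⟩
        have hP1' : g * h = P := hP1
        exact factD (-P) hb h hh (by rw [hP1', neg_neg])
      have hd : -P ∉ (fun h => g * h) '' G := by
        rintro ⟨h, hh, hP1⟩
        have hP1' : g * h = -P := hP1
        exact factA h hh (hP1' ▸ hb)
      have hPp : P ∉ G ∪ (fun h => g * h) '' G := by
        rintro (h | h)
        exacts [ha h, hc h]
      have hPm : P ∉ G ∪ (fun h => -g * h) '' G := by
        rw [mm1]
        rintro (h | h)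
        exacts [ha h, hd h]
      have hnPp : -P ∈ G ∪ (fun h => g * h) '' G := Or.inl hb
      have hnPm : -P ∈ G ∪ (fun h => -g * h) '' G := Or.inl hb
      rw [eps, if_neg hPp, if_pos hnPp, eps, if_neg hPm, if_pos hnPm, eps, if_neg ha,
        if_pos hb]
      norm_num
    · by_cases hc : P ∈ (fun h => g * h) '' G
      · have hd : -P ∉ (fun h => g * h) '' G := by
          rintro ⟨h', hh', hP2⟩
          obtain ⟨h, hh, hP1⟩ := hc
          exact factC h hh h' hh' hP1 hP2
        have hPp : P ∈ G ∪ (fun h => g * h) '' G := Or.inr hc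
        have hPm : P ∉ G ∪ (fun h => -g * h) '' G := by
          rw [mm1]
          rintro (h | h)
          exacts [ha h, hd h]
        have hnPm : -P ∈ G ∪ (fun h => -g * h) '' G := by
          right
          rw [hmemNeg, neg_neg]
          exact hc
        rw [eps, if_pos hPp, eps, if_neg hPm, if_pos hnPm, eps, if_neg ha, if_neg hb]
        norm_num
      · by_cases hd : -P ∈ (fun h => g * h) '' G
        · have hPp : P ∉ G ∪ (fun h => g * h) '' G := by
            rintro (h | h)
            exacts [ha h, hc h]
          have hnPp : -P ∈ G ∪ (fun h => g * h) '' G := Or.inr hd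
          have hPm : P ∈ G ∪ (fun h => -g * h) '' G := by
            rw [mm1]
            exact Or.inr hd
          rw [eps, if_neg hPp, if_pos hnPp, eps, if_pos hPm, eps, if_neg ha, if_neg hb]
          norm_num
        · have hPp : P ∉ G ∪ (fun h => g * h) '' G := by
            rintro (h | h)
            exacts [ha h, hc h]
          have hnPp : -P ∉ G ∪ (fun h => g * h) '' G := by
            rintro (h | h)
            exacts [hb h, hd h]
          have hPm : P ∉ G ∪ (fun h => -g * h) '' G := by
            rw [mm1]
            rintro (h | h)
            exacts [ha h, hd h]
          have hnPm : -P ∉ G ∪ (fun h => -g * h) '' G := by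
            rw [mm1, neg_neg]
            rintro (h | h)
            exacts [hb h, hc h]
          rw [eps, if_neg hPp, if_neg hnPp, eps, if_neg hPm, if_neg hnPm, eps, if_neg ha,
            if_neg hb]
          norm_num

lemma Estab_bisect (Ps : Finset (PauliOp n)) (hPauli : ∀ P ∈ Ps, IsPauli P)
    (w : PauliOp n → ℝ) {G : Set (PauliOp n)} (hG : IsStabGroup G) {g : PauliOp n}
    (hgP : IsPauli g) (hgG : g ∉ G) (hngG : -g ∉ G) :
    Estab Ps w (G ∪ (fun h => g * h) '' G) + Estab Ps w (G ∪ (fun h => -g * h) '' G)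
      = 2 * Estab Ps w G := by
  rw [Estab, Estab, Estab, ← Finset.sum_add_distrib, Finset.mul_sum]
  refine Finset.sum_congr rfl fun P hP => ?_
  have h := eps_bisect hG hgP hgG hngG (hPauli P hP)
  linear_combination (w P) * h

end Bisection

section Main
variable {n : ℕ}

lemma done_of_empty (Ps : Finset (PauliOp n)) (w : PauliOp n → ℝ) (Emin : ℝ)
    {ψ : (Fin n → Fin 2) → ℂ} (hψ : ψ ≠ 0) {Q : Set (PauliOp n)}
    (hsub : genGroup Q ⊆ Stab ψ) (hE : Estab Ps w (genGroup Q) = Emin)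
    (hempty : (Stab ψ ∩ pmSet (Ps : Set (PauliOp n))) \ genGroup Q = ∅) :
    Estab Ps w (Stab ψ) = Emin := by
  have hmem : ∀ P ∈ pmSet ((Ps : Set (PauliOp n))), (P ∈ genGroup Q ↔ P ∈ Stab ψ) := by
    intro P hPm
    constructor
    · exact fun h => hsub h
    · intro h
      by_contra hc
      have hx : P ∈ (Stab ψ ∩ pmSet ((Ps : Set (PauliOp n)))) \ genGroup Q := ⟨⟨h, hPm⟩, hc⟩
      rw [hempty] at hx
      exact hx
  rw [← hE]
  exact (Estab_congr hmem).symm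

lemma key_induction (Ps : Finset (PauliOp n)) (hPauli : ∀ P ∈ Ps, IsPauli P)
    (w : PauliOp n → ℝ) (Emin : ℝ)
    (hlb : Emin ∈ lowerBounds {E : ℝ | ∃ Q ∈ restrictedSubsets (Ps : Set (PauliOp n)),
        E = Estab Ps w (genGroup Q)})
    {ψ : (Fin n → Fin 2) → ℂ} (hψ : ψ ≠ 0) :
    ∀ (m : ℕ) (Q : Set (PauliOp n)), Q ∈ restrictedSubsets (Ps : Set (PauliOp n)) →
      genGroup Q ⊆ Stab ψ → Estab Ps w (genGroup Q) = Emin →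
      ((Stab ψ ∩ pmSet (Ps : Set (PauliOp n))) \ genGroup Q).ncard ≤ m →
      Estab Ps w (Stab ψ) = Emin := by
  intro m
  induction m with
  | zero =>
    intro Q _ hsub hE hm
    have hfin : ((Stab ψ ∩ pmSet ((Ps : Set (PauliOp n)))) \ genGroup Q).Finite :=
      ((stab_finite (stab_isStabGroup hψ)).subset Set.inter_subset_left).subset
        Set.diff_subset
    have hempty := (Set.ncard_eq_zero hfin).mp (Nat.le_zero.mp hm)
    exact done_of_empty Ps w Emin hψ hsub hE hempty
  | succ m ih =>
    intro Q hQR hsub hE hm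
    by_cases hne : ((Stab ψ ∩ pmSet ((Ps : Set (PauliOp n)))) \ genGroup Q) = ∅
    · exact done_of_empty Ps w Emin hψ hsub hE hne
    · obtain ⟨g, hg⟩ := Set.nonempty_iff_ne_empty.mpr hne
      obtain ⟨hQ1, hQ2, hQ3⟩ := hQR
      have hGstab : IsStabGroup (genGroup Q) := genGroup_isStab hPauli hQ1 hQ3
      have hgStab : g ∈ Stab ψ := hg.1.1
      have hgpm : g ∈ pmSet ((Ps : Set (PauliOp n))) := hg.1.2
      have hgG : g ∉ genGroup Q := hg.2
      have hgP : IsPauli g := pmSet_pauli hPauli hgpm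
      have hgsq := isPauli_sq hgP
      have hSG := stab_isStabGroup hψ
      have hngG : -g ∉ genGroup Q := by
        intro hc
        apply hSG.neg_one_not_mem
        have h2 : (-g) * g ∈ Stab ψ := hSG.mul_mem _ (hsub hc) g hgStab
        rwa [neg_mul, hgsq] at h2
      have hcommg : ∀ x ∈ genGroup Q, g * x = x * g :=
        fun x hx => stab_commute hSG hgStab (hsub hx)
      have hGp := genGroup_union_single hgsq hcommg
      have hcommng : ∀ x ∈ genGroup Q, (-g) * x = x * (-g) := by
        intro x hx
        rw [neg_mul, mul_neg, hcommg x hx]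
      have hngsq : (-g) * (-g) = 1 := by rw [neg_mul_neg, hgsq]
      have hGm := genGroup_union_single hngsq hcommng
      have hQg : Q ∪ {g} ⊆ pmSet ((Ps : Set (PauliOp n))) :=
        Set.union_subset hQ1 (Set.singleton_subset_iff.mpr hgpm)
      have hQng : Q ∪ {-g} ⊆ pmSet ((Ps : Set (PauliOp n))) :=
        Set.union_subset hQ1 (Set.singleton_subset_iff.mpr (pmSet_neg_closed hgpm))
      have hsubp : genGroup (Q ∪ {g}) ⊆ Stab ψ := by
        apply genGroup_subset_stab hψ
        apply Set.union_subset
        · exact fun x hx => hsub (subset_genGroup hx)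
        · exact Set.singleton_subset_iff.mpr hgStab
      have hnegp : (-1 : PauliOp n) ∉ genGroup (Q ∪ {g}) :=
        fun hc => hSG.neg_one_not_mem (hsubp hc)
      have hnegm : (-1 : PauliOp n) ∉ genGroup (Q ∪ {-g}) := by
        rw [hGm]
        rintro (hc | ⟨h, hh, hc⟩)
        · exact hGstab.neg_one_not_mem hc
        · apply hgG
          have hc' : -g * h = -1 := hc
          have h2 : -(g * h) = -1 := by rwa [neg_mul] at hc'
          have h3 : g * h = 1 := by rw [← neg_neg (g*h), h2, neg_neg]
          have h4 : g = h := by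
            have h5 := congrArg (fun z => z * h) h3
            rwa [mul_assoc, isPauli_sq (hGstab.pauli h hh), mul_one, one_mul] at h5
          rw [h4]
          exact hh
      obtain ⟨hQpR, hQpG⟩ := restricted_of_gen hQg hnegp
      obtain ⟨hQmR, hQmG⟩ := restricted_of_gen hQng hnegm
      have hEp_ge : Emin ≤ Estab Ps w (genGroup (Q ∪ {g})) := by
        have h6 := hlb ⟨_, hQpR, rfl⟩
        rwa [hQpG] at h6
      have hEm_ge : Emin ≤ Estab Ps w (genGroup (Q ∪ {-g})) := by
        have h6 := hlb ⟨_, hQmR, rfl⟩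
        rwa [hQmG] at h6
      have hbisect := Estab_bisect Ps hPauli w hGstab hgP hgG hngG
      rw [← hGp, ← hGm] at hbisect
      have hEp : Estab Ps w (genGroup (Q ∪ {g})) = Emin := by
        rw [hE] at hbisect
        linarith
      apply ih (genGroup (Q ∪ {g}) ∩ pmSet ((Ps : Set (PauliOp n)))) hQpR
      · rw [hQpG]; exact hsubp
      · rw [hQpG]; exact hEp
      · have hdfin : ((Stab ψ ∩ pmSet ((Ps : Set (PauliOp n)))) \ genGroup Q).Finite :=
          ((stab_finite hSG).subset Set.inter_subset_left).subset Set.diff_subset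
        have hsub2 : (Stab ψ ∩ pmSet ((Ps : Set (PauliOp n)))) \
            genGroup (genGroup (Q ∪ {g}) ∩ pmSet ((Ps : Set (PauliOp n))))
            ⊆ ((Stab ψ ∩ pmSet ((Ps : Set (PauliOp n)))) \ genGroup Q) \ {g} := by
          intro x hx
          refine ⟨⟨hx.1, fun hc => hx.2 ?_⟩, fun hc => hx.2 ?_⟩
          · rw [hQpG]
            exact genGroup_mono Set.subset_union_left hc
          · rw [hQpG]
            rw [Set.mem_singleton_iff] at hc
            subst hc
            exact subset_genGroup (Set.mem_union_right _ rfl)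
        have h7 : (((Stab ψ ∩ pmSet ((Ps : Set (PauliOp n)))) \ genGroup Q) \ {g}).ncard
            < ((Stab ψ ∩ pmSet ((Ps : Set (PauliOp n)))) \ genGroup Q).ncard :=
          Set.ncard_diff_singleton_lt_of_mem hg hdfin
        have h8 := Set.ncard_le_ncard hsub2 (hdfin.subset Set.diff_subset)
        omega

end Main
/-- Stabilizer ground state equivalence theorem: the minimum of
`E_stab(H,⟨Q⟩)` over restricted commuting subsets `Q ∈ 𝒮(Ps)` equals the minimum of
`⟨ψ|H|ψ⟩` over normalized stabilizer states `ψ`; moreover, any stabilizer state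
stabilized by a minimizing `⟨Q⟩` is a stabilizer ground state. -/
theorem stabilizer_ground_state_equivalence {n : ℕ}
    (Ps : Finset (PauliOp n)) (w : PauliOp n → ℝ)
    (hPauli : ∀ P ∈ Ps, IsPauli P) (Emin : ℝ)
    (hmin : IsLeast {E : ℝ | ∃ Q ∈ restrictedSubsets (Ps : Set (PauliOp n)),
        E = Estab Ps w (genGroup Q)} Emin) :
    (∀ ψ : (Fin n → Fin 2) → ℂ, (Stab ψ).ncard = 2 ^ n →
        dotProduct (star ψ) ψ = 1 →
        Emin ≤ (dotProduct (star ψ) ((∑ P ∈ Ps, (w P : ℂ) • P).mulVec ψ)).re) ∧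
    (∃ ψ : (Fin n → Fin 2) → ℂ, (Stab ψ).ncard = 2 ^ n ∧
        dotProduct (star ψ) ψ = 1 ∧
        dotProduct (star ψ) ((∑ P ∈ Ps, (w P : ℂ) • P).mulVec ψ) = (Emin : ℂ)) ∧
    (∀ Q ∈ restrictedSubsets (Ps : Set (PauliOp n)),
      Estab Ps w (genGroup Q) = Emin →
      ∀ ψ : (Fin n → Fin 2) → ℂ, (Stab ψ).ncard = 2 ^ n →
        dotProduct (star ψ) ψ = 1 → genGroup Q ⊆ Stab ψ →
        dotProduct (star ψ) ((∑ P ∈ Ps, (w P : ℂ) • P).mulVec ψ) = (Emin : ℂ)) := by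
  obtain ⟨⟨Q0, hQ0R, hQ0E⟩, hlb⟩ := hmin
  have key : ∀ Q ∈ restrictedSubsets (Ps : Set (PauliOp n)),
      Estab Ps w (genGroup Q) = Emin →
      ∀ ψ : (Fin n → Fin 2) → ℂ, (Stab ψ).ncard = 2 ^ n →
        dotProduct (star ψ) ψ = 1 → genGroup Q ⊆ Stab ψ →
        dotProduct (star ψ) ((∑ P ∈ Ps, (w P : ℂ) • P).mulVec ψ) = (Emin : ℂ) := by
    intro Q hQR hE ψ hcard hnorm hsub
    have hψ : ψ ≠ 0 := by
      intro hc
      rw [hc] at hnorm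
      simp [dotProduct] at hnorm
    have h1 := key_induction Ps hPauli w Emin hlb hψ _ Q hQR hsub hE le_rfl
    rw [expect_energy hcard hnorm Ps hPauli w, h1]
  refine ⟨?_, ?_, key⟩
  · intro ψ hcard hnorm
    have hψ : ψ ≠ 0 := by
      intro hc
      rw [hc] at hnorm
      simp [dotProduct] at hnorm
    have hgsub : genGroup (Stab ψ ∩ pmSet (Ps : Set (PauliOp n))) ⊆ Stab ψ :=
      genGroup_subset_stab hψ Set.inter_subset_left
    have hneg : (-1 : PauliOp n) ∉ genGroup (Stab ψ ∩ pmSet (Ps : Set (PauliOp n))) :=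
      fun hc => (stab_isStabGroup hψ).neg_one_not_mem (hgsub hc)
    obtain ⟨hQR, hQG⟩ := restricted_of_gen Set.inter_subset_right hneg
    have h1 := hlb ⟨_, hQR, rfl⟩
    rw [hQG] at h1
    have h2 : Estab Ps w (genGroup (Stab ψ ∩ pmSet (Ps : Set (PauliOp n))))
        = Estab Ps w (Stab ψ) := by
      apply Estab_congr
      intro P hPm
      exact ⟨fun h => hgsub h, fun h => subset_genGroup ⟨h, hPm⟩⟩
    rw [expect_energy hcard hnorm Ps hPauli w, Complex.ofReal_re]
    linarith
  · have hQ01 := hQ0R.1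
    have hQ03 := hQ0R.2.2
    have hG0 : IsStabGroup (genGroup Q0) := genGroup_isStab hPauli hQ01 hQ03
    obtain ⟨T, hT, hsubT, hTcard⟩ := stab_exists_full hG0
    obtain ⟨ψ, hcard, hnorm, hTsub⟩ := full_stab_state hT hTcard
    exact ⟨ψ, hcard, hnorm, key Q0 hQ0R hQ0E.symm ψ hcard hnorm (hsubT.trans hTsub)⟩
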